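/- (Example 1.) Let a > b > 0 be integers and define λ : Fin 6 → ℤ by λ = (a, b, 0, a+2, b+2, 2). Then l(λ) = 3 and l(2λ) = 6. Consequently l(λ+λ) = l(λ) + l(λ), yet Φ_{λ+λ} ≠ Φ_λ ⊔ Φ_λ since Φ_λ ∩ Φ_λ = Φ_λ ≠ ∅; hence length additivity (condition (3)) does not imply the disjoint-union condition (6) on inversion sets. -/

import Mathlib

/-!
With `ρ = (5, 4, 3, 2, 1, 0)` one has `λ + ρ = (a+5, b+4, 3, a+4, b+3, 2)` and
`2λ + ρ = (2a+5, 2b+4, 3, 2a+6, 2b+5, 4)`; for `a > b > 0` the increasing pairs are read off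
directly, giving `Φ_λ = {(1,3), (2,3), (2,4)}` and a six-element `Φ_{2λ}`. Since `Φ_λ` is
nonempty it is not disjoint from itself.
-/

open Finset

/-- `ρ(i) = n - i` for `i : Fin (n+1)`. -/
def rho (n : ℕ) : Fin (n + 1) → ℤ := fun i => (n : ℤ) - (i : ℤ)

/-- `Φ_λ`: pairs `(i,j)` with `i < j` and `(λ+ρ)(i) < (λ+ρ)(j)`. -/
def Phi (n : ℕ) (l : Fin (n + 1) → ℤ) : Finset (Fin (n + 1) × Fin (n + 1)) :=
  Finset.univ.filter fun p => p.1 < p.2 ∧ l p.1 + rho n p.1 < l p.2 + rho n p.2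

@[simp]
theorem mem_Phi {n : ℕ} {l : Fin (n + 1) → ℤ} {p : Fin (n + 1) × Fin (n + 1)} :
    p ∈ Phi n l ↔ p.1 < p.2 ∧ l p.1 + rho n p.1 < l p.2 + rho n p.2 := by
  simp [Phi]

theorem Phi_example {a b : ℤ} (hab : b < a) (hb : 0 < b) :
    Phi 5 ![a, b, 0, a + 2, b + 2, 2] = {(1, 3), (2, 3), (2, 4)} := by
  ext ⟨i, j⟩
  simp only [mem_Phi, rho, mem_insert, mem_singleton, Prod.mk.injEq]
  fin_cases i <;> fin_cases j <;> simp <;> omega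

theorem Phi_example_add_self {a b : ℤ} (hab : b ≤ a) (hb : 0 ≤ b) :
    Phi 5 (![a, b, 0, a + 2, b + 2, 2] + ![a, b, 0, a + 2, b + 2, 2]) =
      {(0, 3), (1, 3), (1, 4), (2, 3), (2, 4), (2, 5)} := by
  ext ⟨i, j⟩
  simp only [mem_Phi, rho, Pi.add_apply, mem_insert, mem_singleton, Prod.mk.injEq]
  fin_cases i <;> fin_cases j <;> simp <;> omega

theorem stmt_7 (a b : ℤ) (hab : a > b) (hb : b > 0)
    (lam : Fin 6 → ℤ) (hlam : lam = ![a, b, 0, a + 2, b + 2, 2]) :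
    (Phi 5 lam).card = 3 ∧ (Phi 5 (lam + lam)).card = 6 ∧
      (Phi 5 (lam + lam)).card = (Phi 5 lam).card + (Phi 5 lam).card ∧
      Phi 5 lam ∩ Phi 5 lam = Phi 5 lam ∧ Phi 5 lam ≠ ∅ ∧
      ¬(Disjoint (Phi 5 lam) (Phi 5 lam) ∧ Phi 5 lam ∪ Phi 5 lam = Phi 5 (lam + lam)) := by
  subst hlam
  rw [Phi_example hab hb, Phi_example_add_self hab.le hb.le]
  have hne : ({(1, 3), (2, 3), (2, 4)} : Finset (Fin 6 × Fin 6)) ≠ ∅ := by simp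
  exact ⟨rfl, rfl, rfl, inter_self _, hne,
    fun ⟨hdisj, _⟩ => hne ((disjoint_self_iff_empty _).mp hdisj)⟩
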